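/- arXiv:1608.08763 — 4 statements merged into one kernel-verified Lean document; each statement's English description precedes it below -/
import Mathlib

section
/- Lemma 2.2: Let n ≥ 1 be an integer and k ≥ 2 an integer. The function q ↦ (γ_k(n/q) − 1)/(q − 2) is strictly monotone increasing on (1, ∞); precisely, for all real q₁, q₂ with 1 < q₁ < q₂, q₁ ≠ 2 and q₂ ≠ 2, one has (γ_k(n/q₁) − 1)/(q₁ − 2) < (γ_k(n/q₂) − 1)/(q₂ − 2). -/
/-!
Substituting `x = n/q` and unrolling `Γ(s + 1) = s Γ(s)` turns `γ_k(n/q)` into the product of the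
Möbius factors `u_j(q) = ((n + j) q − n)/(j q + n)`, `j < k`. Since `u_j − 1 = n (q − 2)/(j q + n)`,
telescoping the partial products `P_m = ∏_{j<m} u_j` gives
`γ_k(n/q) − 1 = (q − 2) ∑_{m<k} n P_m/(m q + n)`, which removes the singularity at `q = 2`.
The `m = 0` summand is `1`; for `m ≥ 1` the summand is `n (q − 1)/(m q + n)` times a product of
positive increasing factors, and `q ↦ (q − 1)/(m q + n)` is strictly increasing.
-/

open Real

/-- The spectral function `γ_k(x) = Γ(x) Γ(n − x + k) / (Γ(n − x) Γ(x + k))`. -/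
noncomputable def gammaFun (n k : ℕ) (x : ℝ) : ℝ :=
  Gamma x * Gamma ((n : ℝ) - x + k) / (Gamma ((n : ℝ) - x) * Gamma (x + k))

open Finset

theorem Real.Gamma_add_nat_eq_mul_prod {x : ℝ} (hx : 0 < x) (k : ℕ) :
    Gamma (x + k) = Gamma x * ∏ j ∈ range k, (x + j) := by
  induction k with
  | zero => simp
  | succ k ih =>
    rw [Nat.cast_succ, ← add_assoc, Gamma_add_one (by positivity), ih, prod_range_succ]
    ring

theorem Finset.prod_range_sub_one_eq_sum {R : Type*} [CommRing R] (u : ℕ → R) (k : ℕ) :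
    ∏ j ∈ range k, u j - 1 = ∑ m ∈ range k, (u m - 1) * ∏ j ∈ range m, u j := by
  calc ∏ j ∈ range k, u j - 1
      = ∑ m ∈ range k, (∏ j ∈ range (m + 1), u j - ∏ j ∈ range m, u j) := by
        rw [sum_range_sub (fun m ↦ ∏ j ∈ range m, u j), prod_range_zero]
    _ = ∑ m ∈ range k, (u m - 1) * ∏ j ∈ range m, u j :=
        sum_congr rfl fun m _ ↦ by rw [prod_range_succ]; ring

theorem strictMonoOn_div_linear {a b c d : ℝ} (hc : 0 ≤ c) (hd : 0 < d) (hdet : b * c < a * d) :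
    StrictMonoOn (fun q ↦ (a * q + b) / (c * q + d)) (Set.Ici 0) := by
  intro x (hx : 0 ≤ x) y (hy : 0 ≤ y) hxy
  rw [div_lt_div_iff₀ (by positivity) (by positivity)]
  nlinarith [mul_pos (sub_pos.2 hdet) (sub_pos.2 hxy)]

theorem gammaFun_eq_prod {n k : ℕ} {x : ℝ} (hx : 0 < x) (hxn : x < n) :
    gammaFun n k x = ∏ j ∈ range k, ((n - x + j) / (x + j)) := by
  have hnx : 0 < (n : ℝ) - x := sub_pos.2 hxn
  rw [gammaFun, Gamma_add_nat_eq_mul_prod hnx, Gamma_add_nat_eq_mul_prod hx, prod_div_distrib]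
  field_simp [(Gamma_pos_of_pos hx).ne', (Gamma_pos_of_pos hnx).ne']

noncomputable def gammaFactor (n j : ℕ) (q : ℝ) : ℝ :=
  ((n + j) * q - n) / (j * q + n)

noncomputable def gammaQuotient (n k : ℕ) (q : ℝ) : ℝ :=
  ∑ m ∈ range k, n / (m * q + n) * ∏ j ∈ range m, gammaFactor n j q

section gammaFactor

variable {n : ℕ} (hn : 0 < n)
include hn

theorem linear_denom_pos (m : ℕ) {q : ℝ} (hq : 0 ≤ q) : 0 < (m : ℝ) * q + n := by
  have : (0 : ℝ) < n := Nat.cast_pos.2 hn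
  positivity

theorem gammaFun_div_eq_prod (k : ℕ) {q : ℝ} (hq : 1 < q) :
    gammaFun n k (n / q) = ∏ j ∈ range k, gammaFactor n j q := by
  have hn' : (0 : ℝ) < n := Nat.cast_pos.2 hn
  have hq₀ : 0 < q := one_pos.trans hq
  rw [gammaFun_eq_prod (div_pos hn' hq₀) (div_lt_self hn' hq)]
  refine prod_congr rfl fun j _ ↦ ?_
  rw [gammaFactor, div_eq_div_iff (by positivity) (linear_denom_pos hn j hq₀.le).ne']
  field_simp
  ring

theorem gammaFactor_zero (q : ℝ) : gammaFactor n 0 q = q - 1 := by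
  have : (n : ℝ) ≠ 0 := Nat.cast_ne_zero.2 hn.ne'
  simp only [gammaFactor, Nat.cast_zero, add_zero, zero_mul, zero_add]
  field_simp

theorem gammaFactor_sub_one (j : ℕ) {q : ℝ} (hq : 0 ≤ q) :
    gammaFactor n j q - 1 = n * (q - 2) / (j * q + n) := by
  rw [gammaFactor, div_sub_one (linear_denom_pos hn j hq).ne']
  ring

theorem gammaFactor_pos (j : ℕ) {q : ℝ} (hq : 1 < q) : 0 < gammaFactor n j q := by
  have : (0 : ℝ) < n := Nat.cast_pos.2 hn
  refine div_pos ?_ (linear_denom_pos hn j (zero_le_one.trans hq.le))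
  nlinarith [(Nat.cast_nonneg j : (0 : ℝ) ≤ j)]

theorem strictMonoOn_gammaFactor (j : ℕ) : StrictMonoOn (gammaFactor n j) (Set.Ici 0) := by
  have : (0 : ℝ) < n := Nat.cast_pos.2 hn
  convert strictMonoOn_div_linear (a := n + j) (b := -n) (Nat.cast_nonneg j) this
    (by nlinarith [(Nat.cast_nonneg j : (0 : ℝ) ≤ j)]) using 1
  funext q
  rw [gammaFactor, sub_eq_add_neg]

theorem prod_gammaFactor_sub_one (k : ℕ) {q : ℝ} (hq : 0 ≤ q) :
    ∏ j ∈ range k, gammaFactor n j q - 1 = (q - 2) * gammaQuotient n k q := by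
  rw [prod_range_sub_one_eq_sum, gammaQuotient, mul_sum]
  refine sum_congr rfl fun m _ ↦ ?_
  rw [gammaFactor_sub_one hn m hq]
  ring

theorem gammaFun_div_sub_one (k : ℕ) {q : ℝ} (hq : 1 < q) :
    gammaFun n k (n / q) - 1 = (q - 2) * gammaQuotient n k q := by
  rw [gammaFun_div_eq_prod hn k hq, prod_gammaFactor_sub_one hn k (zero_le_one.trans hq.le)]

theorem strictMonoOn_gammaQuotient_summand (m : ℕ) :
    StrictMonoOn (fun q ↦ n / ((m + 1 : ℕ) * q + n) * ∏ j ∈ range (m + 1), gammaFactor n j q)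
      (Set.Ioi 1) := by
  intro x (hx : 1 < x) y (hy : 1 < y) hxy
  have hn' : (0 : ℝ) < n := Nat.cast_pos.2 hn
  have hIoi : Set.Ioi (1 : ℝ) ⊆ Set.Ici 0 := fun q (hq : 1 < q) ↦ zero_le_one.trans hq.le
  have hlead : (x - 1) / ((m + 1 : ℕ) * x + n) < (y - 1) / ((m + 1 : ℕ) * y + n) := by
    have := strictMonoOn_div_linear (a := 1) (b := -1) (Nat.cast_nonneg (m + 1)) hn'
      (by nlinarith [(Nat.cast_nonneg (m + 1) : (0 : ℝ) ≤ (m + 1 : ℕ))]) (hIoi hx) (hIoi hy) hxy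
    simpa only [one_mul, ← sub_eq_add_neg] using this
  simp only [prod_range_succ', gammaFactor_zero hn]
  calc n / ((m + 1 : ℕ) * x + n) * ((∏ j ∈ range m, gammaFactor n (j + 1) x) * (x - 1))
      = n * ((x - 1) / ((m + 1 : ℕ) * x + n)) * ∏ j ∈ range m, gammaFactor n (j + 1) x := by
        ring
    _ < n * ((y - 1) / ((m + 1 : ℕ) * y + n)) * ∏ j ∈ range m, gammaFactor n (j + 1) y := by
        refine mul_lt_mul (mul_lt_mul_of_pos_left hlead hn') ?_
          (prod_pos fun j _ ↦ gammaFactor_pos hn _ hx) ?_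
        · exact prod_le_prod (fun j _ ↦ (gammaFactor_pos hn _ hx).le) fun j _ ↦
            (strictMonoOn_gammaFactor hn _).monotoneOn (hIoi hx) (hIoi hy) hxy.le
        · exact mul_nonneg hn'.le (div_pos (sub_pos.2 hy) (linear_denom_pos hn _ (hIoi hy))).le
    _ = n / ((m + 1 : ℕ) * y + n) * ((∏ j ∈ range m, gammaFactor n (j + 1) y) * (y - 1)) := by
        ring

theorem strictMonoOn_gammaQuotient {k : ℕ} (hk : 2 ≤ k) :
    StrictMonoOn (gammaQuotient n k) (Set.Ioi 1) := by
  intro x hx y hy hxy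
  refine sum_lt_sum (fun m _ ↦ ?_) ⟨1, mem_range.2 hk, strictMonoOn_gammaQuotient_summand hn 0 hx hy hxy⟩
  rcases m with _ | m
  · simp
  · exact (strictMonoOn_gammaQuotient_summand hn m hx hy hxy).le

end gammaFactor

/-- Lemma 2.2: strict monotonicity of `q ↦ (γ_k(n/q) − 1)/(q − 2)` on `(1, ∞)`. -/
theorem gammaFun_quotient_strictMono (n k : ℕ) (hn : 1 ≤ n) (hk : 2 ≤ k) :
    ∀ q₁ q₂ : ℝ, 1 < q₁ → q₁ < q₂ → q₁ ≠ 2 → q₂ ≠ 2 →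
      (gammaFun n k ((n : ℝ) / q₁) - 1) / (q₁ - 2) <
        (gammaFun n k ((n : ℝ) / q₂) - 1) / (q₂ - 2) := by
  intro q₁ q₂ hq₁ hq₁₂ hq₁_ne hq₂_ne
  have hq₂ : 1 < q₂ := hq₁.trans hq₁₂
  rw [gammaFun_div_sub_one hn k hq₁, gammaFun_div_sub_one hn k hq₂,
    mul_div_cancel_left₀ _ (sub_ne_zero.2 hq₁_ne), mul_div_cancel_left₀ _ (sub_ne_zero.2 hq₂_ne)]
  exact strictMonoOn_gammaQuotient hn hk hq₁ hq₂ hq₁₂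
end

section
/- Key differential inequality for the spectral function: Let n ≥ 1 be an integer and k ≥ 2 an integer. For every x ∈ (0, n), α_k(x)² − α_k′(x) − (2/x) α_k(x) ≥ Σ_{j=1}^{k−1} 2(n+j)(n+2j) / ( (n−x)(n+j−x)(j+x)² ), and in particular the left-hand side is strictly positive. -/
/-!
Write `S = Σ_{j=1}^{k-1} β_j(x)`. Since `β_0(x) = 1/(n-x) + 1/x`, the `j = 0` contributions to
`α_k²`, `α_k′` and `(2/x) α_k` cancel, leaving `S² + 2S/(n-x) - Σ_{j≥1} β_j′(x)`. The terms `β_j`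
are positive, so `S² ≥ Σ_{j≥1} β_j²`, and each `2β_j/(n-x) + β_j² - β_j′` equals
`2 (1/(n-x) + 1/(j+x)) β_j`, which is the `j`-th summand of the bound.
-/

open Real

/-- `β_j(x) = 1/(n + j − x) + 1/(j + x)`. -/
noncomputable def betaFun (n j : ℕ) (x : ℝ) : ℝ :=
  1 / ((n : ℝ) + j - x) + 1 / ((j : ℝ) + x)

/-- `α_k(x) = Σ_{j=0}^{k−1} β_j(x)`. -/
noncomputable def alphaFun (n k : ℕ) (x : ℝ) : ℝ :=
  ∑ j ∈ Finset.range k, betaFun n j x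

open Finset

noncomputable def betaDeriv (n j : ℕ) (x : ℝ) : ℝ :=
  1 / ((n : ℝ) + j - x) ^ 2 - 1 / ((j : ℝ) + x) ^ 2

lemma hasDerivAt_betaFun {n j : ℕ} {x : ℝ} (h₁ : (n : ℝ) + j - x ≠ 0) (h₂ : (j : ℝ) + x ≠ 0) :
    HasDerivAt (betaFun n j) (betaDeriv n j x) x := by
  have h := (((hasDerivAt_id' x).const_sub ((n : ℝ) + j)).inv h₁).add
    (((hasDerivAt_id' x).const_add (j : ℝ)).inv h₂)
  have hβ : betaFun n j = fun y ↦ ((n : ℝ) + j - y)⁻¹ + ((j : ℝ) + y)⁻¹ := by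
    funext y; simp only [betaFun, one_div]
  rw [hβ]
  exact h.congr_deriv (by rw [betaDeriv]; ring)

lemma deriv_alphaFun {n : ℕ} (k : ℕ) {x : ℝ} (hx₀ : 0 < x) (hxn : x < n) :
    deriv (alphaFun n k) x = ∑ j ∈ range k, betaDeriv n j x := by
  have hβ : ∀ j ∈ range k, HasDerivAt (betaFun n j) (betaDeriv n j x) x := fun j _ ↦ by
    have hj : (0 : ℝ) ≤ j := j.cast_nonneg
    exact hasDerivAt_betaFun (by linarith) (by linarith)
  exact (HasDerivAt.fun_sum hβ).deriv

lemma betaFun_pos {n : ℕ} (j : ℕ) {x : ℝ} (hx₀ : 0 < x) (hxn : x < n) : 0 < betaFun n j x := by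
  have hj : (0 : ℝ) ≤ j := j.cast_nonneg
  have h₁ : 0 < (n : ℝ) + j - x := by linarith
  unfold betaFun
  positivity

lemma sum_range_eq_add_sum_Icc {M : Type*} [AddCommMonoid M] (f : ℕ → M) {k : ℕ} (hk : 1 ≤ k) :
    ∑ j ∈ range k, f j = f 0 + ∑ j ∈ Icc 1 (k - 1), f j := by
  rw [sum_range_eq_add_Ico f hk, Icc_sub_one_right_eq_Ico_of_not_isMin (by simp; omega)]

lemma alphaFun_sq_sub_deriv_sub_two_div_mul {n k : ℕ} (hk : 1 ≤ k) {x : ℝ} (hx₀ : 0 < x)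
    (hxn : x < n) :
    alphaFun n k x ^ 2 - deriv (alphaFun n k) x - 2 / x * alphaFun n k x =
      (∑ j ∈ Icc 1 (k - 1), betaFun n j x) ^ 2 + 2 / (n - x) * ∑ j ∈ Icc 1 (k - 1), betaFun n j x
        - ∑ j ∈ Icc 1 (k - 1), betaDeriv n j x := by
  rw [deriv_alphaFun k hx₀ hxn, alphaFun, sum_range_eq_add_sum_Icc _ hk,
    sum_range_eq_add_sum_Icc _ hk]
  have hβ₀ : betaFun n 0 x = 1 / (n - x) + 1 / x := by simp [betaFun]
  have hβ₀' : betaDeriv n 0 x = (1 / (n - x)) ^ 2 - (1 / x) ^ 2 := by simp [betaDeriv]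
  rw [hβ₀, hβ₀']
  ring

lemma bound_summand_eq {n : ℕ} (j : ℕ) {x : ℝ} (h₀ : (n : ℝ) - x ≠ 0)
    (h₁ : (n : ℝ) + j - x ≠ 0) (h₂ : (j : ℝ) + x ≠ 0) :
    2 * ((n : ℝ) + j) * ((n : ℝ) + 2 * j) / (((n : ℝ) - x) * ((n : ℝ) + j - x) * ((j : ℝ) + x) ^ 2)
      = 2 / (n - x) * betaFun n j x + betaFun n j x ^ 2 - betaDeriv n j x := by
  rw [betaFun, betaDeriv]
  field_simp
  ring

lemma bound_summand_pos {n : ℕ} (j : ℕ) {x : ℝ} (hx₀ : 0 < x) (hxn : x < n) :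
    0 < 2 * ((n : ℝ) + j) * ((n : ℝ) + 2 * j) /
      (((n : ℝ) - x) * ((n : ℝ) + j - x) * ((j : ℝ) + x) ^ 2) := by
  have hj : (0 : ℝ) ≤ j := j.cast_nonneg
  have h₀ : 0 < (n : ℝ) - x := by linarith
  have h₁ : 0 < (n : ℝ) + j - x := by linarith
  have hn : 0 < (n : ℝ) := by linarith
  positivity

theorem alphaFun_diff_ineq_general (n k : ℕ) (hk : 2 ≤ k) :
    ∀ x ∈ Set.Ioo (0 : ℝ) (n : ℝ),
      (alphaFun n k x) ^ 2 - deriv (alphaFun n k) x - 2 / x * alphaFun n k x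
          ≥ ∑ j ∈ Finset.Icc 1 (k - 1),
              2 * ((n : ℝ) + j) * ((n : ℝ) + 2 * j) /
                (((n : ℝ) - x) * ((n : ℝ) + j - x) * ((j : ℝ) + x) ^ 2) ∧
      0 < (alphaFun n k x) ^ 2 - deriv (alphaFun n k) x - 2 / x * alphaFun n k x := by
  rintro x ⟨hx₀, hxn⟩
  have hsq : ∑ j ∈ Icc 1 (k - 1), betaFun n j x ^ 2 ≤ (∑ j ∈ Icc 1 (k - 1), betaFun n j x) ^ 2 :=
    sum_sq_le_sq_sum_of_nonneg fun j _ ↦ (betaFun_pos j hx₀ hxn).le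
  have hge : (alphaFun n k x) ^ 2 - deriv (alphaFun n k) x - 2 / x * alphaFun n k x
      ≥ ∑ j ∈ Icc 1 (k - 1), 2 * ((n : ℝ) + j) * ((n : ℝ) + 2 * j) /
          (((n : ℝ) - x) * ((n : ℝ) + j - x) * ((j : ℝ) + x) ^ 2) := by
    have hj : ∀ j : ℕ, (0 : ℝ) ≤ j := fun j ↦ j.cast_nonneg
    rw [alphaFun_sq_sub_deriv_sub_two_div_mul (by omega) hx₀ hxn,
      sum_congr rfl fun j _ ↦ bound_summand_eq j (by linarith) (by linarith [hj j])
        (by linarith [hj j]),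
      sum_sub_distrib, sum_add_distrib, ← mul_sum]
    linarith
  exact ⟨hge, (sum_pos (fun j _ ↦ bound_summand_pos j hx₀ hxn) ⟨1, by simp; omega⟩).trans_le hge⟩

/-- Key differential inequality for the spectral function. -/
theorem alphaFun_diff_ineq (n k : ℕ) (hn : 1 ≤ n) (hk : 2 ≤ k) :
    ∀ x ∈ Set.Ioo (0 : ℝ) (n : ℝ),
      (alphaFun n k x) ^ 2 - deriv (alphaFun n k) x - 2 / x * alphaFun n k x
          ≥ ∑ j ∈ Finset.Icc 1 (k - 1),
              2 * ((n : ℝ) + j) * ((n : ℝ) + 2 * j) /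
                (((n : ℝ) - x) * ((n : ℝ) + j - x) * ((j : ℝ) + x) ^ 2) ∧
      0 < (alphaFun n k x) ^ 2 - deriv (alphaFun n k) x - 2 / x * alphaFun n k x :=
  alphaFun_diff_ineq_general n k hk
end

section
/- Beckner's spectral comparison: Let n ≥ 3 be an integer, q ∈ (2, 2n/(n−2)], and k ≥ 1 an integer. Then Γ(n − n/q + k)/Γ(n/q + k) − Γ(n − n/q)/Γ(n/q) ≤ k(k + n − 1). -/
open Real

/-- Bernoulli-type bound from convexity of exp. -/
lemma rpow_le_one_sub_add (c t : ℝ) (hc : 0 < c) (ht0 : 0 ≤ t) (ht1 : t ≤ 1) :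
    c ^ t ≤ 1 - t + t * c := by
  have h := convexOn_exp.2 (Set.mem_univ (0 : ℝ)) (Set.mem_univ (Real.log c))
    (by linarith : (0:ℝ) ≤ 1 - t) ht0 (by ring)
  simp only [smul_eq_mul, mul_zero, zero_add, Real.exp_zero, Real.exp_log hc] at h
  rw [Real.rpow_def_of_pos hc, mul_comm (Real.log c) t]
  linarith [h]

lemma key_ineq (y a : ℝ) (hy : 1/2 ≤ y) (ha0 : 0 < a) (ha2 : a ≤ 2) :
    a * Gamma (y + a) ≤ (a + 2*y) * y * Gamma y := by
  have hy0 : (0:ℝ) < y := by linarith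
  have hG : 0 < Gamma y := Real.Gamma_pos_of_pos hy0
  set t : ℝ := a / 2 with ht
  have ht0 : 0 < t := by positivity
  have ht1 : t ≤ 1 := by rw [ht]; linarith
  -- log convexity : Γ(y+a) ≤ Γ(y) * (y*(y+1))^t
  have hGy2 : Gamma (y + 2) = (y+1) * y * Gamma y := by
    rw [show y + 2 = (y+1) + 1 by ring, Real.Gamma_add_one (by positivity),
      Real.Gamma_add_one (ne_of_gt hy0)]
    ring
  have hlc : Gamma (y + a) ≤ Gamma y * (y * (y+1)) ^ t := by
    rcases eq_or_lt_of_le ht1 with h1 | h1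
    · have ha : a = 2 := by rw [ht] at h1; linarith
      rw [h1, Real.rpow_one, ha, hGy2]
      apply le_of_eq; ring
    · have h := Real.Gamma_mul_add_mul_le_rpow_Gamma_mul_rpow_Gamma hy0
        (by linarith : (0:ℝ) < y + 2) (by linarith : (0:ℝ) < 1 - t) ht0 (by ring)
      rw [show (1-t) * y + t * (y+2) = y + a by rw [ht]; ring] at h
      calc Gamma (y+a) ≤ Gamma y ^ (1-t) * Gamma (y+2) ^ t := h
        _ = Gamma y ^ (1-t) * (Gamma y ^ t * (y*(y+1)) ^ t) := by
            rw [hGy2, show (y+1)*y*Gamma y = Gamma y * (y*(y+1)) by ring,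
              Real.mul_rpow hG.le (by positivity)]
        _ = Gamma y * (y*(y+1)) ^ t := by
            rw [← mul_assoc, ← Real.rpow_add hG, show (1-t)+t = (1:ℝ) by ring, Real.rpow_one]
  -- Bernoulli
  set c : ℝ := y * (y + 1) with hc
  have hc0 : 0 < c := by positivity
  have hb : c ^ t ≤ 1 - t + t * c := rpow_le_one_sub_add c t hc0 ht0.le ht1
  -- combine
  have h2 : a * Gamma (y+a) ≤ a * (Gamma y * (1 - t + t * c)) := by
    calc a * Gamma (y+a) ≤ a * (Gamma y * c ^ t) := by
          apply mul_le_mul_of_nonneg_left hlc ha0.le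
      _ ≤ a * (Gamma y * (1 - t + t * c)) := by
          apply mul_le_mul_of_nonneg_left (mul_le_mul_of_nonneg_left hb hG.le) ha0.le
  refine h2.trans ?_
  rw [show (a + 2*y) * y * Gamma y = (a * y + 2 * y^2) * Gamma y by ring,
    show a * (Gamma y * (1 - t + t * c)) = (a * (1 - t + t*c)) * Gamma y by ring]
  apply mul_le_mul_of_nonneg_right _ hG.le
  -- a = 2t, c = y^2 + y : need 2t(1-t+tc) ≤ 2ty + 2y^2, i.e. (1-t)(y^2+(c-1)t) ≥ 0
  have ha : a = 2 * t := by rw [ht]; ring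
  rw [ha, hc]
  nlinarith [mul_nonneg (by linarith : (0:ℝ) ≤ 1 - t)
    (by nlinarith [mul_nonneg (by linarith : (0:ℝ) ≤ 2*y - 1) (by linarith : (0:ℝ) ≤ y + 1)] :
      (0:ℝ) ≤ y^2 + (y*(y+1) - 1) * t)]

/-- Beckner's spectral comparison: for `n ≥ 3`, `q ∈ (2, 2n/(n−2)]` and `k ≥ 1`,
`δ_k(n/q) ≤ k(k + n − 1)`. -/
theorem beckner_spectral_comparison (n k : ℕ) (hn : 3 ≤ n) (hk : 1 ≤ k) (q : ℝ)
    (hq : q ∈ Set.Ioc (2 : ℝ) (2 * n / ((n : ℝ) - 2))) :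
    Gamma ((n : ℝ) - (n : ℝ) / q + k) / Gamma ((n : ℝ) / q + k)
        - Gamma ((n : ℝ) - (n : ℝ) / q) / Gamma ((n : ℝ) / q)
      ≤ (k : ℝ) * ((k : ℝ) + (n : ℝ) - 1) := by
  obtain ⟨hq2, hqn⟩ := hq
  have hn3 : (3:ℝ) ≤ (n:ℝ) := by exact_mod_cast hn
  have hn2 : (0:ℝ) < (n:ℝ) - 2 := by linarith
  have hq0 : (0:ℝ) < q := by linarith
  set x : ℝ := (n:ℝ) / q with hx
  have hx_hi : x < (n:ℝ) / 2 := by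
    rw [hx]
    apply div_lt_div_of_pos_left (by linarith) (by norm_num) hq2
  have hx_lo : ((n:ℝ) - 2) / 2 ≤ x := by
    rw [hx, div_le_div_iff₀ (by norm_num) hq0]
    have h2 : q * ((n:ℝ) - 2) ≤ 2 * n := by
      rw [le_div_iff₀ hn2] at hqn; linarith
    nlinarith
  have hx0 : 0 < x := by linarith
  have hxa : 0 < (n:ℝ) - 2*x := by linarith
  have hxa2 : (n:ℝ) - 2*x ≤ 2 := by linarith
  -- main induction
  have main : ∀ m : ℕ, Gamma ((n:ℝ) - x + m) / Gamma (x + m) - Gamma ((n:ℝ) - x) / Gamma x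
      ≤ (m:ℝ) * ((m:ℝ) + (n:ℝ) - 1) := by
    intro m
    induction m with
    | zero => simp
    | succ m ih =>
      have hy : (1:ℝ)/2 ≤ x + m := by
        have : (0:ℝ) ≤ (m:ℝ) := Nat.cast_nonneg m
        linarith
      have hy0 : (0:ℝ) < x + m := by linarith
      have hGy : 0 < Gamma (x + m) := Real.Gamma_pos_of_pos hy0
      have hkey := key_ineq (x + m) ((n:ℝ) - 2*x) hy hxa hxa2
      rw [show x + m + ((n:ℝ) - 2*x) = (n:ℝ) - x + m by ring] at hkey
      have hnum : Gamma ((n:ℝ) - x + (m+1:ℕ)) = ((n:ℝ) - x + m) * Gamma ((n:ℝ) - x + m) := by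
        push_cast
        rw [show (n:ℝ) - x + ((m:ℝ)+1) = ((n:ℝ) - x + m) + 1 by ring,
          Real.Gamma_add_one (by
            have hm : (0:ℝ) ≤ (m:ℝ) := Nat.cast_nonneg m
            intro hcontra; nlinarith)]
      have hden : Gamma (x + (m+1:ℕ)) = (x + m) * Gamma (x + m) := by
        push_cast
        rw [show x + ((m:ℝ)+1) = (x + m) + 1 by ring, Real.Gamma_add_one (ne_of_gt hy0)]
      rw [hnum, hden]
      have hsplit : ((n:ℝ) - x + m) * Gamma ((n:ℝ) - x + m) / ((x + m) * Gamma (x + m))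
          = Gamma ((n:ℝ) - x + m) / Gamma (x + m)
            + (((n:ℝ) - 2*x) * Gamma ((n:ℝ) - x + m)) / ((x + m) * Gamma (x + m)) := by
        field_simp
        ring
      rw [hsplit]
      have hinc : (((n:ℝ) - 2*x) * Gamma ((n:ℝ) - x + m)) / ((x + m) * Gamma (x + m))
          ≤ (n:ℝ) + 2*m := by
        rw [div_le_iff₀ (by positivity)]
        calc ((n:ℝ) - 2*x) * Gamma ((n:ℝ) - x + m)
            ≤ (((n:ℝ) - 2*x) + 2*(x+m)) * (x+m) * Gamma (x+m) := hkey
          _ = ((n:ℝ) + 2*m) * ((x + m) * Gamma (x + m)) := by ring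
      push_cast
      nlinarith [ih, hinc]
  exact main k
end

section
/- Taylor formula with integral remainder for |1+t|^q: Let q ∈ (2, ∞). For every t ∈ ℝ, |1+t|^q = 1 + q t + (1/2) q (q−1) t² + (1/2) q (q−1)(q−2) ∫₀^t (t−u)² |1+u|^{q−4} (1+u) du, where the integrand is locally integrable since q > 2. -/
/-! Expanding `(x - u) ^ 2` splits the Taylor remainder of `|x| ^ q` into integrals of
`|u| ^ (q - 4) * u`, `|u| ^ (q - 2)` and `|u| ^ (q - 2) * u`, with primitives
`|u| ^ (q - 2) / (q - 2)`, `|u| ^ (q - 2) * u / (q - 1)` and `|u| ^ q / q`. These are obtained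
from `∫ x ^ r` on the positive half-line and carried over to the negative one by parity, which
also deals with the (integrable) singularity of `|u| ^ (q - 4) * u` at `0`. -/

open intervalIntegral MeasureTheory
open scoped Interval

lemma abs_rpow_sub_two_mul_sq {r : ℝ} (hr : r ≠ 0) (x : ℝ) :
    |x| ^ (r - 2) * x ^ 2 = |x| ^ r := by
  rw [← sq_abs x, ← Real.rpow_natCast, ← Real.rpow_add' (abs_nonneg x) (by norm_num [hr])]
  norm_num

section Parity

variable {E : Type*} [NormedAddCommGroup E] [NormedSpace ℝ E] {f : ℝ → E}

lemma Function.Odd.integral_zero_neg (hf : Function.Odd f) (b : ℝ) :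
    ∫ x in 0..-b, f x = ∫ x in 0..b, f x := by
  have h := integral_comp_neg (a := 0) (b := b) f
  simp only [hf _, intervalIntegral.integral_neg, neg_zero] at h
  rw [integral_symm, ← h, neg_neg]

lemma Function.Even.integral_zero_neg (hf : Function.Even f) (b : ℝ) :
    ∫ x in 0..-b, f x = -∫ x in 0..b, f x := by
  have h := integral_comp_neg (a := 0) (b := b) f
  simp only [hf _, neg_zero] at h
  rw [integral_symm, ← h]

end Parity

variable {s : ℝ}

lemma intervalIntegrable_abs_rpow_mul_self (hs : -2 < s) (a b : ℝ) :
    IntervalIntegrable (fun x => |x| ^ s * x) volume a b := by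
  refine intervalIntegrable_of_odd (fun x => by simp) fun c hc => ?_
  refine (intervalIntegrable_rpow' (r := s + 1) (by linarith)).congr fun x hx => ?_
  have hx : 0 < x := (Set.uIoc_of_le hc.le ▸ hx).1
  rw [abs_of_pos hx, Real.rpow_add_one hx.ne']

lemma intervalIntegrable_abs_rpow (hs : -1 < s) (a b : ℝ) :
    IntervalIntegrable (fun x => |x| ^ s) volume a b := by
  refine intervalIntegrable_of_even (fun x => by simp) fun c hc => ?_
  refine (intervalIntegrable_rpow' hs).congr fun x hx => ?_
  rw [abs_of_pos (Set.uIoc_of_le hc.le ▸ hx).1]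

lemma integral_zero_abs_rpow_mul_self (hs : -2 < s) (b : ℝ) :
    ∫ x in 0..b, |x| ^ s * x = |b| ^ (s + 2) / (s + 2) := by
  wlog hb : 0 ≤ b generalizing b
  · have hodd : Function.Odd fun x : ℝ => |x| ^ s * x := fun x => by simp
    simpa [hodd.integral_zero_neg] using this (-b) (by linarith)
  have hpos : ∀ x ∈ Ι 0 b, |x| ^ s * x = x ^ (s + 1) := fun x hx => by
    have hx : 0 < x := (Set.uIoc_of_le hb ▸ hx).1
    rw [abs_of_pos hx, Real.rpow_add_one hx.ne']
  rw [integral_congr_ae (ae_of_all _ hpos), integral_rpow (Or.inl (by linarith)),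
    Real.zero_rpow (by linarith), abs_of_nonneg hb]
  ring_nf

lemma integral_zero_abs_rpow (hs : -1 < s) (b : ℝ) :
    ∫ x in 0..b, |x| ^ s = |b| ^ s * b / (s + 1) := by
  wlog hb : 0 ≤ b generalizing b
  · have heven : Function.Even fun x : ℝ => |x| ^ s := fun x => by simp
    have := this (-b) (by linarith)
    rw [heven.integral_zero_neg, abs_neg] at this
    linear_combination -this
  have hpos : ∀ x ∈ Ι 0 b, |x| ^ s = x ^ s := fun x hx => by
    rw [abs_of_pos (Set.uIoc_of_le hb ▸ hx).1]
  rw [integral_congr_ae (ae_of_all _ hpos), integral_rpow (Or.inl hs),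
    Real.zero_rpow (by linarith), abs_of_nonneg hb, Real.rpow_add_one' hb (by linarith), sub_zero]

lemma integral_abs_rpow_mul_self (hs : -2 < s) (a b : ℝ) :
    ∫ x in a..b, |x| ^ s * x = (|b| ^ (s + 2) - |a| ^ (s + 2)) / (s + 2) := by
  rw [← integral_interval_sub_left (intervalIntegrable_abs_rpow_mul_self hs 0 b)
    (intervalIntegrable_abs_rpow_mul_self hs 0 a), integral_zero_abs_rpow_mul_self hs,
    integral_zero_abs_rpow_mul_self hs, sub_div]

lemma integral_abs_rpow (hs : -1 < s) (a b : ℝ) :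
    ∫ x in a..b, |x| ^ s = (|b| ^ s * b - |a| ^ s * a) / (s + 1) := by
  rw [← integral_interval_sub_left (intervalIntegrable_abs_rpow hs 0 b)
    (intervalIntegrable_abs_rpow hs 0 a), integral_zero_abs_rpow hs, integral_zero_abs_rpow hs,
    sub_div]

theorem abs_rpow_taylor {q : ℝ} (hq : 2 < q) (a x : ℝ) :
    |x| ^ q = |a| ^ q + q * (|a| ^ (q - 2) * a) * (x - a) +
      1 / 2 * q * (q - 1) * |a| ^ (q - 2) * (x - a) ^ 2 +
      1 / 2 * q * (q - 1) * (q - 2) * ∫ u in a..x, (x - u) ^ 2 * |u| ^ (q - 4) * u := by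
  have hq₀ : q ≠ 0 := by linarith
  have hq₁ : q - 1 ≠ 0 := by linarith
  have hq₂ : q - 2 ≠ 0 := by linarith
  have h₁ :=
    (intervalIntegrable_abs_rpow_mul_self (s := q - 4) (by linarith) a x).const_mul (x ^ 2)
  have h₂ := (intervalIntegrable_abs_rpow (s := q - 2) (by linarith) a x).const_mul (2 * x)
  have h₃ := intervalIntegrable_abs_rpow_mul_self (s := q - 2) (by linarith) a x
  have hsplit : ∫ u in a..x, (x - u) ^ 2 * |u| ^ (q - 4) * u =
      x ^ 2 * (∫ u in a..x, |u| ^ (q - 4) * u) - 2 * x * (∫ u in a..x, |u| ^ (q - 2)) +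
        ∫ u in a..x, |u| ^ (q - 2) * u := by
    rw [← intervalIntegral.integral_const_mul, ← intervalIntegral.integral_const_mul,
      ← integral_sub h₁ h₂, ← integral_add (h₁.sub h₂) h₃]
    refine integral_congr fun u _ => ?_
    have h := abs_rpow_sub_two_mul_sq (r := q - 2) (by linarith) u
    rw [show q - 2 - 2 = q - 4 by ring] at h
    linear_combination (u - 2 * x) * h
  rw [hsplit, integral_abs_rpow_mul_self (by linarith), integral_abs_rpow (by linarith),
    integral_abs_rpow_mul_self (by linarith), show q - 4 + 2 = q - 2 by ring,
    show q - 2 + 1 = q - 1 by ring, show q - 2 + 2 = q by ring,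
    ← abs_rpow_sub_two_mul_sq hq₀ x, ← abs_rpow_sub_two_mul_sq hq₀ a]
  field_simp
  ring

/-- Taylor formula with integral remainder for `|1+t|^q`, `q > 2`. -/
theorem abs_one_add_rpow_taylor (q : ℝ) (hq : 2 < q) :
    ∀ t : ℝ,
      |1 + t| ^ q
        = 1 + q * t + 1 / 2 * q * (q - 1) * t ^ 2 +
          1 / 2 * q * (q - 1) * (q - 2) *
            ∫ u in (0 : ℝ)..t, (t - u) ^ 2 * |1 + u| ^ (q - 4) * (1 + u) := by
  intro t
  have hshift :=
    integral_comp_add_left (fun u => (1 + t - u) ^ 2 * |u| ^ (q - 4) * u) 1 (a := 0) (b := t)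
  simp only [add_sub_add_left_eq_sub, add_zero] at hshift
  rw [abs_rpow_taylor hq 1 (1 + t), ← hshift]
  norm_num
end
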